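/- Consider the $2\times 2$ block matrix (with $3\times 3$ blocks) $A(y)$ whose blocks are $a^{1,1} = \mathrm{diag}(2,2,1)$, $a^{2,2} = \mathrm{diag}(27,1,1)$, $a^{1,2}$ having single nonzero entry $b(y)$ in position $(1,1)$, and $a^{2,1}$ having single nonzero entry $w(y)$ in position $(1,2)$, where $0 \leq b(y) \leq 2$ and $-10 \leq w(y) \leq 0$. Then for every $\xi = (\xi^1, \xi^2) \in \mathbb{R}^{2\times 3}$, $\sum_{\alpha,\beta=1}^{2}\sum_{i,j=1}^{3} a_{i,j}^{\alpha,\beta}(y)\, \xi_i^\alpha \xi_j^\beta \geq |\xi|^2$. -/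
import Mathlib

open Finset

/-- Ellipticity of the example coefficients. -/
theorem stmt_9 (b w : ℝ) (hb0 : 0 ≤ b) (hb2 : b ≤ 2)
    (hw0 : -10 ≤ w) (hw1 : w ≤ 0) (ξ : Fin 2 → Fin 3 → ℝ) :
    2 * (ξ 0 0) ^ 2 + 2 * (ξ 0 1) ^ 2 + (ξ 0 2) ^ 2 +
        b * (ξ 0 0) * (ξ 1 0) + w * (ξ 1 0) * (ξ 0 1) +
        27 * (ξ 1 0) ^ 2 + (ξ 1 1) ^ 2 + (ξ 1 2) ^ 2 ≥
      ∑ α : Fin 2, ∑ i : Fin 3, (ξ α i) ^ 2 := by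
  simp only [Fin.sum_univ_two, Fin.sum_univ_three]
  nlinarith [sq_nonneg (2 * ξ 0 0 + b * ξ 1 0), sq_nonneg (2 * ξ 0 1 + w * ξ 1 0),
    mul_nonneg (mul_nonneg (by linarith : (0:ℝ) ≤ 2 - b) (by linarith : (0:ℝ) ≤ 2 + b))
      (sq_nonneg (ξ 1 0)),
    mul_nonneg (mul_nonneg (by linarith : (0:ℝ) ≤ 10 + w) (by linarith : (0:ℝ) ≤ 10 - w))
      (sq_nonneg (ξ 1 0))]
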